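/- If A ⋈^f J is a Gaussian ring, then A is a Gaussian ring. -/

import Mathlib

variable {A B : Type*} [CommRing A] [CommRing B]

/-- The amalgamation `A ⋈^f J` of `A` and `B` along the ideal `J` with respect to `f`,
as a subring of `A × B`. -/
def amalg (f : A →+* B) (J : Ideal B) : Subring (A × B) where
  carrier := {p | ∃ a, ∃ j ∈ J, p = (a, f a + j)}
  zero_mem' := ⟨0, 0, J.zero_mem, by simp [Prod.ext_iff]⟩
  one_mem' := ⟨1, 0, J.zero_mem, by simp [Prod.ext_iff]⟩
  add_mem' := by
    rintro _ _ ⟨a, j, hj, rfl⟩ ⟨a', j', hj', rfl⟩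
    exact ⟨a + a', j + j', J.add_mem hj hj', by simp [Prod.ext_iff]; ring⟩
  neg_mem' := by
    rintro _ ⟨a, j, hj, rfl⟩
    exact ⟨-a, -j, J.neg_mem hj, by simp [Prod.ext_iff]; ring⟩
  mul_mem' := by
    rintro _ _ ⟨a, j, hj, rfl⟩ ⟨a', j', hj', rfl⟩
    exact ⟨a * a', f a * j' + j * f a' + j * j',
      J.add_mem (J.add_mem (J.mul_mem_left _ hj') (J.mul_mem_right _ hj)) (J.mul_mem_right _ hj),
      by simp [Prod.ext_iff]; ring⟩

/-- The set of zero-divisors of a ring. -/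
def zdSet (R : Type*) [CommRing R] : Set R := {a | ∃ b, b ≠ 0 ∧ a * b = 0}

/-- The content ideal of a polynomial: the ideal generated by its coefficients. -/
def contentIdeal {R : Type*} [CommRing R] (p : Polynomial R) : Ideal R :=
  Ideal.span (Set.range p.coeff)

/-- A polynomial is Gaussian if `c(ph) = c(p) c(h)` for every polynomial `h`. -/
def IsGaussianPoly {R : Type*} [CommRing R] (p : Polynomial R) : Prop :=
  ∀ h : Polynomial R, contentIdeal (p * h) = contentIdeal p * contentIdeal h

/-- A Gaussian ring. -/
def IsGaussianRing (R : Type*) [CommRing R] : Prop :=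
  ∀ p q : Polynomial R, contentIdeal (p * q) = contentIdeal p * contentIdeal q

/-- A Prüfer ring: every finitely generated regular ideal is invertible
(in the total ring of quotients). -/
def IsPruferRing (R : Type*) [CommRing R] : Prop :=
  ∀ I : Ideal R, I.FG → (∃ r ∈ I, r ∈ nonZeroDivisors R) →
    ∃ T : FractionalIdeal (nonZeroDivisors R) (FractionRing R),
      (I : FractionalIdeal (nonZeroDivisors R) (FractionRing R)) * T = 1

theorem contentIdeal_map {R S : Type*} [CommRing R] [CommRing S] (g : R →+* S)
    (p : Polynomial R) : contentIdeal (p.map g) = (contentIdeal p).map g := by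
  rw [contentIdeal, contentIdeal, Ideal.map_span, ← Set.range_comp]
  congr
  ext n
  exact Polynomial.coeff_map g n

theorem IsGaussianRing.of_surjective {R S : Type*} [CommRing R] [CommRing S] {g : R →+* S}
    (hg : Function.Surjective g) (hR : IsGaussianRing R) : IsGaussianRing S := by
  intro p q
  obtain ⟨p, rfl⟩ := Polynomial.map_surjective g hg p
  obtain ⟨q, rfl⟩ := Polynomial.map_surjective g hg q
  rw [← Polynomial.map_mul, contentIdeal_map, contentIdeal_map, contentIdeal_map, hR,
    Ideal.map_mul]

def amalgFst (f : A →+* B) (J : Ideal B) : amalg f J →+* A :=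
  (RingHom.fst A B).comp (amalg f J).subtype

theorem amalgFst_surjective (f : A →+* B) (J : Ideal B) :
    Function.Surjective (amalgFst f J) :=
  fun a => ⟨⟨(a, f a), a, 0, J.zero_mem, by simp⟩, rfl⟩

/-- If `A ⋈^f J` is Gaussian, then so is `A`. -/
theorem gaussian_of_amalg_gaussian (f : A →+* B) (J : Ideal B)
    (h : IsGaussianRing ↥(amalg f J)) : IsGaussianRing A :=
  h.of_surjective (amalgFst_surjective f J)
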